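/- arXiv:2501.19385 — 3 statements merged into one kernel-verified Lean document; each statement's English description precedes it below -/
import Mathlib

section
/- Let n ≥ 1 and let G be the n-fold Cartesian product of the two-way infinite path P_∞ with itself, i.e., the graph on vertex set ℤ^n in which two vertices are adjacent if and only if they differ by exactly 1 in exactly one coordinate and agree in all other coordinates. Then every general position set of G has cardinality at most 2^(2^(n−1)), and G contains a general position set of cardinality exactly 2^(2^(n−1)). -/
open SimpleGraph

/-- `S` is a general position set of `G`: no three pairwise distinct vertices of `S`
lie on a common shortest path, i.e. no `v ∈ S` lies strictly between `u, w ∈ S`. -/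
def IsGPSet {V : Type*} (G : SimpleGraph V) (S : Set V) : Prop :=
  ∀ u ∈ S, ∀ v ∈ S, ∀ w ∈ S, u ≠ v → v ≠ w → u ≠ w →
    ¬(G.Reachable u w ∧ G.dist u v + G.dist v w = G.dist u w)

/-- The `n`-fold Cartesian product of the two-way infinite path with itself:
vertices are elements of `ℤ^n`, two of them adjacent iff they differ by exactly `1`
in exactly one coordinate and agree elsewhere. -/
def intGridGraph (n : ℕ) : SimpleGraph (Fin n → ℤ) where
  Adj u v := ∃ i, |u i - v i| = 1 ∧ ∀ j, j ≠ i → u j = v j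
  symm := by
    constructor
    rintro u v ⟨i, h1, h2⟩
    exact ⟨i, by rwa [abs_sub_comm], fun j hj => (h2 j hj).symm⟩
  loopless := by
    constructor
    rintro u ⟨i, h1, -⟩
    simp at h1

namespace GPAux

variable {n : ℕ}

def l1 (u v : Fin n → ℤ) : ℕ := ∑ i, (u i - v i).natAbs

lemma l1_triangle (u v w : Fin n → ℤ) : l1 u w ≤ l1 u v + l1 v w := by
  rw [l1, l1, l1, ← Finset.sum_add_distrib]
  exact Finset.sum_le_sum fun i _ => by omega

lemma l1_eq_one_of_adj {u v : Fin n → ℤ} (h : (intGridGraph n).Adj u v) : l1 u v = 1 := by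
  obtain ⟨i, h1, h2⟩ := h
  have key : ∀ j, (u j - v j).natAbs = if j = i then 1 else 0 := by
    intro j
    by_cases hj : j = i
    · subst hj
      rw [Int.abs_eq_natAbs] at h1
      simp only [if_pos rfl]
      exact_mod_cast h1
    · simp [hj, h2 j hj]
  rw [l1, Finset.sum_congr rfl (fun j _ => key j)]
  simp

lemma le_length {u v : Fin n → ℤ} (p : (intGridGraph n).Walk u v) : l1 u v ≤ p.length := by
  induction p with
  | nil => simp [l1]
  | @cons a b c h p ih =>
    rw [Walk.length_cons]
    calc l1 a c ≤ l1 a b + l1 b c := l1_triangle a b c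
      _ ≤ 1 + p.length := by have := l1_eq_one_of_adj h; omega
      _ = p.length + 1 := by omega

lemma exists_walk : ∀ (k : ℕ) (u v : Fin n → ℤ), l1 u v = k →
    ∃ p : (intGridGraph n).Walk u v, p.length = k := by
  intro k
  induction k with
  | zero =>
    intro u v h
    have huv : u = v := by
      funext i
      have := (Finset.sum_eq_zero_iff.mp h) i (Finset.mem_univ i)
      omega
    subst huv
    exact ⟨Walk.nil, rfl⟩
  | succ k ih =>
    intro u v h
    have hne : ∃ i, u i ≠ v i := by
      by_contra hc
      push_neg at hc
      have : l1 u v = 0 := by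
        rw [l1]; exact Finset.sum_eq_zero fun i _ => by rw [hc i]; simp
      omega
    obtain ⟨i, hi⟩ := hne
    set d : ℤ := if u i < v i then 1 else -1 with hd
    set u' : Fin n → ℤ := Function.update u i (u i + d) with hu'
    have hadj : (intGridGraph n).Adj u u' := by
      refine ⟨i, ?_, fun j hj => ?_⟩
      · rw [hu', Function.update_self]
        by_cases hlt : u i < v i <;> simp [hd, hlt]
      · rw [hu', Function.update_of_ne hj]
    have hstep : l1 u' v + 1 = l1 u v := by
      have hfun : ∀ j, (u' j - v j).natAbs =
          Function.update (fun j => (u j - v j).natAbs) i ((u i + d - v i).natAbs) j := by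
        intro j
        by_cases hj : j = i
        · subst hj; rw [hu', Function.update_self, Function.update_self]
        · rw [hu', Function.update_of_ne hj, Function.update_of_ne hj]
      have h1 : l1 u' v = (u i + d - v i).natAbs +
          ∑ j ∈ Finset.univ.erase i, (u j - v j).natAbs := by
        rw [l1, Finset.sum_congr rfl (fun j _ => hfun j)]
        rw [Finset.sum_update_of_mem (Finset.mem_univ i), Finset.sdiff_singleton_eq_erase]
      have h2 : l1 u v = (u i - v i).natAbs +
          ∑ j ∈ Finset.univ.erase i, (u j - v j).natAbs := by
        rw [l1, ← Finset.add_sum_erase _ _ (Finset.mem_univ i)]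
      rw [h1, h2]
      by_cases hlt : u i < v i <;> simp only [hd, if_pos, if_neg, hlt, ite_true, ite_false] <;> omega
    obtain ⟨p, hp⟩ := ih u' v (by omega)
    exact ⟨Walk.cons hadj p, by rw [Walk.length_cons, hp]⟩

lemma grid_reachable (u v : Fin n → ℤ) : (intGridGraph n).Reachable u v := by
  obtain ⟨p, -⟩ := exists_walk (l1 u v) u v rfl
  exact ⟨p⟩

lemma grid_dist (u v : Fin n → ℤ) : (intGridGraph n).dist u v = l1 u v := by
  obtain ⟨p, hp⟩ := exists_walk (l1 u v) u v rfl
  refine le_antisymm (hp ▸ SimpleGraph.dist_le p) ?_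
  obtain ⟨q, hq⟩ := (grid_reachable u v).exists_walk_length_eq_dist
  rw [← hq]
  exact le_length q

lemma between_iff (u v w : Fin n → ℤ) :
    (intGridGraph n).dist u v + (intGridGraph n).dist v w = (intGridGraph n).dist u w ↔
    ∀ i, (u i - v i).natAbs + (v i - w i).natAbs = (u i - w i).natAbs := by
  rw [grid_dist, grid_dist, grid_dist, l1, l1, l1, ← Finset.sum_add_distrib, eq_comm,
    Finset.sum_eq_sum_iff_of_le (fun i _ => by omega)]
  exact ⟨fun h i => (h i (Finset.mem_univ i)).symm, fun h i _ => (h i).symm⟩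

lemma not_gp_of_chain {S : Set (Fin n → ℤ)} (hS : IsGPSet (intGridGraph n) S)
    {u v w : Fin n → ℤ} (hu : u ∈ S) (hv : v ∈ S) (hw : w ∈ S)
    (huv : u ≠ v) (hvw : v ≠ w) (huw : u ≠ w)
    (h : ∀ i, (u i - v i).natAbs + (v i - w i).natAbs = (u i - w i).natAbs) : False :=
  hS u hu v hv w hw huv hvw huw ⟨grid_reachable u w, (between_iff u v w).mpr h⟩


def sg (t : Fin n → Bool) : Fin (n+1) → ℤ := Fin.cons 1 (fun j => if t j then 1 else -1)

lemma sg_zero (t : Fin n → Bool) : sg t 0 = 1 := rfl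

lemma sg_succ (t : Fin n → Bool) (j : Fin n) : sg t j.succ = if t j then 1 else -1 := by
  simp [sg]

lemma sg_cases (t : Fin n → Bool) (i : Fin (n+1)) : sg t i = 1 ∨ sg t i = -1 := by
  rcases Fin.eq_zero_or_eq_succ i with rfl | ⟨j, rfl⟩
  · left; rfl
  · rw [sg_succ]; by_cases h : t j <;> simp [h]

def ptle (t : Fin n → Bool) (u v : Fin (n+1) → ℤ) : Prop := ∀ i, 0 ≤ sg t i * (v i - u i)

lemma upper (S : Set (Fin (n+1) → ℤ)) (hS : IsGPSet (intGridGraph (n+1)) S) :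
    S.Finite ∧ S.ncard ≤ 2 ^ 2 ^ n := by
  classical
  set F : (Fin (n+1) → ℤ) → Set (Fin n → Bool) :=
    fun x => {t | ∃ y ∈ S, y ≠ x ∧ ptle t y x} with hF
  have hinj : Set.InjOn F S := by
    have key : ∀ a ∈ S, ∀ b ∈ S, a ≠ b → a 0 ≤ b 0 → F a ≠ F b := by
      intro a ha b hb hab h0 hFab
      set t : Fin n → Bool := fun j => decide (a j.succ ≤ b j.succ) with ht
      have hab' : ptle t a b := by
        intro i
        rcases Fin.eq_zero_or_eq_succ i with rfl | ⟨j, rfl⟩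
        · rw [sg_zero]; omega
        · rw [sg_succ]
          by_cases h : a j.succ ≤ b j.succ <;> simp [ht, h] <;> omega
      have htb : t ∈ F b := ⟨a, ha, hab, hab'⟩
      have hta : t ∉ F a := by
        rintro ⟨z, hz, hza, hzt⟩
        have hzb : z ≠ b := by
          rintro rfl
          apply hab
          funext i
          have h1 := hzt i
          have h2 := hab' i
          rcases sg_cases t i with h | h <;> rw [h] at h1 h2 <;> omega
        exact not_gp_of_chain hS hz ha hb hza hab hzb (fun i => by
          have h1 := hzt i
          have h2 := hab' i
          rcases sg_cases t i with h | h <;> rw [h] at h1 h2 <;> omega)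
      rw [hFab] at hta
      exact hta htb
    intro x hx y hy hFxy
    by_contra hne
    rcases le_total (x 0) (y 0) with h | h
    · exact key x hx y hy hne h hFxy
    · exact key y hy x hx (Ne.symm hne) h hFxy.symm
  constructor
  · exact Set.Finite.of_finite_image (Set.toFinite _) hinj
  · calc S.ncard = (F '' S).ncard := (Set.ncard_image_of_injOn hinj).symm
      _ ≤ (Set.univ : Set (Set (Fin n → Bool))).ncard :=
          Set.ncard_le_ncard (Set.subset_univ _) (Set.toFinite _)
      _ = 2 ^ 2 ^ n := by
          rw [Set.ncard_univ, Nat.card_eq_fintype_card]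
          simp

noncomputable def rk : (Fin n → Bool) → ℕ := fun t => (Fintype.equivFin (Fin n → Bool) t : ℕ)

lemma rk_inj : Function.Injective (rk (n := n)) :=
  Fin.val_injective.comp (Fintype.equivFin _).injective |>.comp fun _ _ h => h

noncomputable def pt (f : (Fin n → Bool) → Bool) : Fin (n+1) → ℤ :=
  fun i => ∑ t : Fin n → Bool, if f t then sg t i * 2 ^ rk t else 0

lemma geom2 (k : ℕ) : ∑ r ∈ Finset.range k, (2:ℤ) ^ r = 2 ^ k - 1 := by
  induction k with
  | zero => simp
  | succ k ih => rw [Finset.sum_range_succ, ih]; ring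

lemma key {f g : (Fin n → Bool) → Bool} (hfg : f ≠ g) :
    ∃ t : Fin n → Bool, f t ≠ g t ∧
      ∀ i, 0 < (if g t then (1:ℤ) else -1) * (sg t i * (pt g i - pt f i)) := by
  classical
  set T : Finset (Fin n → Bool) := Finset.univ.filter (fun t => f t ≠ g t) with hTdef
  have hT : T.Nonempty := by
    rcases Function.ne_iff.mp hfg with ⟨t, ht⟩
    exact ⟨t, by simp [hTdef, ht]⟩
  obtain ⟨t₀, ht₀T, hmax⟩ := T.exists_max_image rk hT
  have ht₀ : f t₀ ≠ g t₀ := by simpa [hTdef] using ht₀T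
  refine ⟨t₀, ht₀, fun i => ?_⟩
  have hdiff : pt g i - pt f i =
      ∑ t ∈ T, ((if g t then (1:ℤ) else -1) * sg t i) * 2 ^ rk t := by
    rw [pt, pt, ← Finset.sum_sub_distrib, hTdef, Finset.sum_filter]
    refine Finset.sum_congr rfl fun t _ => ?_
    by_cases h1 : f t <;> by_cases h2 : g t <;> simp [h1, h2] <;> ring
  have hR : |∑ t ∈ T.erase t₀, ((if g t then (1:ℤ) else -1) * sg t i) * 2 ^ rk t|
      ≤ 2 ^ rk t₀ - 1 := by
    calc |∑ t ∈ T.erase t₀, ((if g t then (1:ℤ) else -1) * sg t i) * 2 ^ rk t|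
        ≤ ∑ t ∈ T.erase t₀, |((if g t then (1:ℤ) else -1) * sg t i) * 2 ^ rk t| :=
          Finset.abs_sum_le_sum_abs _ _
      _ = ∑ t ∈ T.erase t₀, (2:ℤ) ^ rk t := by
          refine Finset.sum_congr rfl fun t _ => ?_
          have hc : ((if g t then (1:ℤ) else -1) * sg t i) = 1 ∨
              ((if g t then (1:ℤ) else -1) * sg t i) = -1 := by
            rcases sg_cases t i with h | h <;> by_cases hg : g t <;> simp [h, hg]
          have h2 : (0:ℤ) ≤ 2 ^ rk t := by positivity
          rcases hc with h | h <;> rw [h] <;> simp [abs_of_nonneg h2]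
      _ = ∑ r ∈ (T.erase t₀).image rk, (2:ℤ) ^ r :=
          (Finset.sum_image (fun a _ b _ h => rk_inj h)).symm
      _ ≤ ∑ r ∈ Finset.range (rk t₀), (2:ℤ) ^ r := by
          refine Finset.sum_le_sum_of_subset_of_nonneg ?_ (fun r _ _ => by positivity)
          intro r hr
          rw [Finset.mem_image] at hr
          obtain ⟨t, htE, rfl⟩ := hr
          rw [Finset.mem_erase] at htE
          rw [Finset.mem_range]
          have h1 := hmax t htE.2
          have h2 : rk t ≠ rk t₀ := fun h => htE.1 (rk_inj h)
          omega
      _ = 2 ^ rk t₀ - 1 := geom2 _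
  rw [hdiff, ← Finset.add_sum_erase _ _ ht₀T]
  have h2k : (1:ℤ) ≤ 2 ^ rk t₀ := one_le_pow₀ (by norm_num)
  set R : ℤ := ∑ t ∈ T.erase t₀, ((if g t then (1:ℤ) else -1) * sg t i) * 2 ^ rk t with hRdef
  rcases abs_le.mp hR with ⟨hR1, hR2⟩
  rcases sg_cases t₀ i with h | h <;> by_cases hg : g t₀ <;>
    simp only [h, hg, ite_true, ite_false, Bool.false_eq_true, reduceIte] <;> nlinarith
lemma pt_inj : Function.Injective (pt (n := n)) := by
  intro f g hfg
  by_contra hne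
  obtain ⟨t, -, hk⟩ := key hne
  have h0 := hk 0
  rw [congrFun hfg 0] at h0
  simp at h0

lemma lower : ∃ S : Finset (Fin (n+1) → ℤ),
    IsGPSet (intGridGraph (n+1)) ↑S ∧ S.card = 2 ^ 2 ^ n := by
  classical
  refine ⟨Finset.univ.image pt, ?_, ?_⟩
  · rintro u hu v hv w hw huv hvw huw ⟨-, hdist⟩
    simp only [Finset.coe_image, Finset.coe_univ, Set.image_univ, Set.mem_range] at hu hv hw
    obtain ⟨f, rfl⟩ := hu
    obtain ⟨g, rfl⟩ := hv
    obtain ⟨h, rfl⟩ := hw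
    have hfg : f ≠ g := fun e => huv (by rw [e])
    have hgh : g ≠ h := fun e => hvw (by rw [e])
    have habs := (between_iff _ _ _).mp hdist
    obtain ⟨t₁, ht₁, k₁⟩ := key hfg
    obtain ⟨t₂, ht₂, k₂⟩ := key hgh
    have same : ∀ i, (if g t₁ then (1:ℤ) else -1) * sg t₁ i
        = (if h t₂ then (1:ℤ) else -1) * sg t₂ i := by
      intro i
      have h1 := k₁ i
      have h2 := k₂ i
      have hb := habs i
      rcases sg_cases t₁ i with s1 | s1 <;> rcases sg_cases t₂ i with s2 | s2 <;>
        by_cases e1 : g t₁ <;> by_cases e2 : h t₂ <;>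
          simp only [s1, s2, e1, e2, ite_true, ite_false, Bool.false_eq_true, reduceIte]
            at h1 h2 ⊢ <;> omega
    have hT : t₁ = t₂ := by
      funext j
      have hs := same j.succ
      have h0 := same 0
      rw [sg_zero, sg_zero] at h0
      rw [sg_succ, sg_succ] at hs
      by_cases e1 : g t₁ <;> by_cases e2 : h t₂ <;> by_cases b1 : t₁ j <;> by_cases b2 : t₂ j <;>
        simp_all
    have h0 := same 0
    rw [sg_zero, sg_zero, hT] at h0
    by_cases e1 : g t₂ <;> by_cases e2 : h t₂ <;> simp [e1, e2] at h0 ht₂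
  · rw [Finset.card_image_of_injective _ pt_inj, Finset.card_univ]
    simp

end GPAux

theorem gp_int_grid (n : ℕ) (hn : 1 ≤ n) :
    (∀ S : Set (Fin n → ℤ), IsGPSet (intGridGraph n) S →
      S.Finite ∧ S.ncard ≤ 2 ^ 2 ^ (n - 1)) ∧
    (∃ S : Finset (Fin n → ℤ), IsGPSet (intGridGraph n) ↑S ∧
      S.card = 2 ^ 2 ^ (n - 1)) := by
  obtain ⟨m, rfl⟩ : ∃ m, n = m + 1 := ⟨n - 1, by omega⟩
  simp only [Nat.add_sub_cancel]
  exact ⟨fun S hS => GPAux.upper S hS, GPAux.lower⟩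
end

section
/- If k ≥ 2 and n_1, …, n_k ≥ 2, then gp(K_{n_1} □ ⋯ □ K_{n_k}) ≥ n_1 + ⋯ + n_k − k, where K_{n_1} □ ⋯ □ K_{n_k} is the Cartesian product of complete graphs. Moreover, for k = 2 equality holds: gp(K_{n_1} □ K_{n_2}) = n_1 + n_2 − 2. -/
open SimpleGraph

/-- The general position number of `G`. -/
noncomputable def gpNum {V : Type*} (G : SimpleGraph V) [Fintype V] : ℕ :=
  sSup {n | ∃ S : Finset V, IsGPSet G ↑S ∧ S.card = n}

/-- The Cartesian product of the complete graphs `K_{n 1} □ ⋯ □ K_{n k}`: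
vertices are tuples, two of them adjacent iff they differ in exactly one coordinate. -/
def hammingGraph {k : ℕ} (n : Fin k → ℕ) : SimpleGraph (∀ i, Fin (n i)) where
  Adj u v := ∃ i, u i ≠ v i ∧ ∀ j, j ≠ i → u j = v j
  symm := by
    constructor
    rintro u v ⟨i, h1, h2⟩
    exact ⟨i, h1.symm, fun j hj => (h2 j hj).symm⟩
  loopless := by
    constructor
    rintro u ⟨i, h1, -⟩
    exact h1 rfl

/-! ### Auxiliary lemmas -/

/-- Generic: a distance-two criterion. -/
lemma aux_dist_eq_two {V : Type*} {G : SimpleGraph V} {u v m : V}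
    (hne : u ≠ v) (hna : ¬ G.Adj u v) (h1 : G.Adj u m) (h2 : G.Adj m v) :
    G.dist u v = 2 := by
  have hle : G.dist u v ≤ 2 := by
    have := SimpleGraph.dist_le (h1.toWalk.append h2.toWalk)
    simpa using this
  have hr : G.Reachable u v := ⟨h1.toWalk.append h2.toWalk⟩
  have h0 : G.dist u v ≠ 0 := by
    intro h
    rcases SimpleGraph.dist_eq_zero_iff_eq_or_not_reachable.mp h with h' | h'
    · exact hne h'
    · exact h' hr
  have h1' : G.dist u v ≠ 1 := fun h => hna (SimpleGraph.dist_eq_one_iff_adj.mp h)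
  omega

lemma aux_not_adj_of_two {k : ℕ} {n : Fin k → ℕ} {u v : ∀ i, Fin (n i)} {i j : Fin k}
    (hij : i ≠ j) (hi : u i ≠ v i) (hj : u j ≠ v j) : ¬ (hammingGraph n).Adj u v := by
  rintro ⟨m, -, hall⟩
  rcases eq_or_ne i m with rfl | him
  · exact hj (hall j (fun h => hij h.symm))
  · exact hi (hall i him)

section Lower

variable {k : ℕ} {n : Fin k → ℕ}

/-- The lower bound `∑ nᵢ - k ≤ gp`. -/
lemma aux_lower (hn : ∀ i, 2 ≤ n i) :
    (∑ i, n i) - k ≤ gpNum (hammingGraph n) := by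
  classical
  set z : ∀ i, Fin (n i) := fun i => ⟨0, by have := hn i; omega⟩ with hz
  set f : (i : Fin k) → Fin (n i) → (∀ j, Fin (n j)) := fun i a => Function.update z i a with hf
  -- basic evaluation facts
  have hfi : ∀ (i : Fin k) (a : Fin (n i)), f i a i = a := by
    intro i a; simp [hf]
  have hfj : ∀ (i j : Fin k) (a : Fin (n i)), j ≠ i → f i a j = z j := by
    intro i j a hji; simp [hf, Function.update_of_ne hji]
  -- the general position set
  set S : Finset (∀ i, Fin (n i)) :=
    Finset.univ.biUnion (fun i => (Finset.univ.erase (z i)).image (f i)) with hS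
  -- adjacency facts
  have hadj_same : ∀ (i : Fin k) (a c : Fin (n i)), a ≠ c →
      (hammingGraph n).Adj (f i a) (f i c) := by
    intro i a c hac
    refine ⟨i, by simpa [hfi] using hac, fun j hj => by rw [hfj i j a hj, hfj i j c hj]⟩
  have hadj_z : ∀ (i : Fin k) (a : Fin (n i)), a ≠ z i →
      (hammingGraph n).Adj (f i a) z := by
    intro i a ha
    exact ⟨i, by simpa [hfi] using ha, fun j hj => hfj i j a hj⟩
  have hdist_same : ∀ (i : Fin k) (a c : Fin (n i)), a ≠ c →
      (hammingGraph n).dist (f i a) (f i c) = 1 := by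
    intro i a c hac
    exact SimpleGraph.dist_eq_one_iff_adj.mpr (hadj_same i a c hac)
  have hdist_ne : ∀ (i j : Fin k) (a : Fin (n i)) (c : Fin (n j)), i ≠ j →
      a ≠ z i → c ≠ z j → (hammingGraph n).dist (f i a) (f j c) = 2 := by
    intro i j a c hij ha hc
    have hii : f i a i ≠ f j c i := by
      rw [hfi, hfj j i c hij]; exact ha
    have hjj : f i a j ≠ f j c j := by
      rw [hfi, hfj i j a (fun h => hij h.symm)]
      exact fun h => hc h.symm
    refine aux_dist_eq_two ?_ (aux_not_adj_of_two hij hii hjj) (hadj_z i a ha)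
      ((hadj_z j c hc).symm)
    intro h; rw [h] at hii; exact hii rfl
  -- membership characterization
  have hmem : ∀ v, v ∈ S ↔ ∃ i, ∃ a : Fin (n i), a ≠ z i ∧ v = f i a := by
    intro v
    simp only [hS, Finset.mem_biUnion, Finset.mem_univ, true_and, Finset.mem_image,
      Finset.mem_erase]
    constructor
    · rintro ⟨i, a, ⟨ha, -⟩, rfl⟩; exact ⟨i, a, ha, rfl⟩
    · rintro ⟨i, a, ha, rfl⟩; exact ⟨i, a, ⟨ha, trivial⟩, rfl⟩
  -- S is a general position set
  have hGP : IsGPSet (hammingGraph n) ↑S := by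
    intro u hu v hv w hw huv hvw huw ⟨hr, heq⟩
    rw [Finset.mem_coe, hmem] at hu hv hw
    obtain ⟨i, a, ha, rfl⟩ := hu
    obtain ⟨j, b, hb, rfl⟩ := hv
    obtain ⟨l, c, hc, rfl⟩ := hw
    rcases eq_or_ne i j with rfl | hij
    · have hab : a ≠ b := fun h => huv (by rw [h])
      rcases eq_or_ne i l with rfl | hil
      · have hbc : b ≠ c := fun h => hvw (by rw [h])
        have hac : a ≠ c := fun h => huw (by rw [h])
        rw [hdist_same i a b hab, hdist_same i b c hbc, hdist_same i a c hac] at heq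
        omega
      · rw [hdist_same i a b hab, hdist_ne i l b c hil hb hc,
          hdist_ne i l a c hil ha hc] at heq
        omega
    · rcases eq_or_ne j l with rfl | hjl
      · have hbc : b ≠ c := fun h => hvw (by rw [h])
        rw [hdist_ne i j a b hij ha hb, hdist_same j b c hbc,
          hdist_ne i j a c hij ha hc] at heq
        omega
      · rcases eq_or_ne i l with rfl | hil
        · have hac : a ≠ c := fun h => huw (by rw [h])
          rw [hdist_ne i j a b hij ha hb, hdist_ne j i b c hjl hb hc,
            hdist_same i a c hac] at heq
          omega
        · rw [hdist_ne i j a b hij ha hb, hdist_ne j l b c hjl hb hc,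
            hdist_ne i l a c hil ha hc] at heq
          omega
  -- cardinality
  have hcard : (∑ i, n i) - k ≤ S.card := by
    have hdisj : ∀ i ∈ (Finset.univ : Finset (Fin k)), ∀ j ∈ Finset.univ, i ≠ j →
        Disjoint ((Finset.univ.erase (z i)).image (f i))
          ((Finset.univ.erase (z j)).image (f j)) := by
      intro i _ j _ hij
      rw [Finset.disjoint_left]
      rintro x hx hx'
      simp only [Finset.mem_image, Finset.mem_erase, Finset.mem_univ, and_true] at hx hx'
      obtain ⟨a, ha, rfl⟩ := hx
      obtain ⟨c, hc, hce⟩ := hx'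
      have := congrFun hce i
      rw [hfi, hfj j i c hij] at this
      exact ha this.symm
    have hc1 : S.card = ∑ i, ((Finset.univ.erase (z i)).image (f i)).card :=
      Finset.card_biUnion hdisj
    have hc2 : ∀ i, ((Finset.univ.erase (z i)).image (f i)).card = n i - 1 := by
      intro i
      rw [Finset.card_image_of_injective _ (Function.update_injective z i),
        Finset.card_erase_of_mem (Finset.mem_univ _), Finset.card_univ,
        Fintype.card_fin]
    have hc3 : ∑ i, n i ≤ (∑ i, (n i - 1)) + k := by
      have : ∑ i, n i ≤ ∑ i : Fin k, ((n i - 1) + 1) := by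
        refine Finset.sum_le_sum fun i _ => ?_
        have := hn i; omega
      rw [Finset.sum_add_distrib, Finset.sum_const, Finset.card_univ, Fintype.card_fin,
        smul_eq_mul, mul_one] at this
      exact this
    rw [hc1]
    calc (∑ i, n i) - k ≤ ∑ i, (n i - 1) := by omega
      _ = ∑ i, ((Finset.univ.erase (z i)).image (f i)).card := by
          exact Finset.sum_congr rfl fun i _ => (hc2 i).symm
  -- conclude
  refine le_trans hcard (le_csSup ?_ ⟨S, hGP, rfl⟩)
  refine ⟨Fintype.card (∀ i, Fin (n i)), ?_⟩
  rintro m ⟨T, -, rfl⟩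
  exact Finset.card_le_univ T

end Lower

section Upper

variable {n₁ n₂ : ℕ}

/-- Upper bound for the rook's graph. -/
lemma aux_upper (h1 : 2 ≤ n₁) (h2 : 2 ≤ n₂) :
    gpNum (hammingGraph ![n₁, n₂]) ≤ n₁ + n₂ - 2 := by
  classical
  set G2 := hammingGraph ![n₁, n₂] with hG2
  have hempty : IsGPSet G2 ↑(∅ : Finset (∀ i : Fin 2, Fin (![n₁, n₂] i))) := by
    intro u hu; simp at hu
  refine csSup_le ⟨0, ∅, hempty, rfl⟩ ?_
  rintro m ⟨S, hS, rfl⟩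
  -- extensionality
  have hext : ∀ u v : ∀ i : Fin 2, Fin (![n₁, n₂] i), u 0 = v 0 → u 1 = v 1 → u = v := by
    intro u v h0 h1'
    funext i; fin_cases i <;> assumption
  -- adjacency facts
  have hadj0 : ∀ u v : ∀ i : Fin 2, Fin (![n₁, n₂] i), u 0 ≠ v 0 → u 1 = v 1 →
      G2.Adj u v := by
    intro u v h0 h1'
    refine ⟨0, h0, fun j hj => ?_⟩
    fin_cases j
    · simp at hj
    · exact h1'
  have hadj1 : ∀ u v : ∀ i : Fin 2, Fin (![n₁, n₂] i), u 0 = v 0 → u 1 ≠ v 1 →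
      G2.Adj u v := by
    intro u v h0 h1'
    refine ⟨1, h1', fun j hj => ?_⟩
    fin_cases j
    · exact h0
    · simp at hj
  have hdist2 : ∀ u v : ∀ i : Fin 2, Fin (![n₁, n₂] i), u 0 ≠ v 0 → u 1 ≠ v 1 →
      G2.dist u v = 2 := by
    intro u v h0 h1'
    have hm1 : Function.update u 1 (v 1) 1 = v 1 := by rw [Function.update_self]
    have hm0 : Function.update u 1 (v 1) 0 = u 0 := by
      rw [Function.update_of_ne (by decide)]
    refine aux_dist_eq_two (fun h => h0 (by rw [h]))
      (aux_not_adj_of_two (show (0 : Fin 2) ≠ 1 by decide) h0 h1')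
      (hadj1 u _ hm0.symm (by rw [hm1]; exact fun h => h1' h))
      (hadj0 _ v (by rw [hm0]; exact h0) hm1)
  -- the key structural consequence of being a GP set
  have hstar : ∀ v ∈ S, ∀ u ∈ S, ∀ w ∈ S, u ≠ v → u 0 = v 0 → w ≠ v → w 1 = v 1 →
      False := by
    intro v hv u hu w hw huv hu0 hwv hw1
    have hu1 : u 1 ≠ v 1 := fun h => huv (hext u v hu0 h)
    have hw0 : w 0 ≠ v 0 := fun h => hwv (hext w v h hw1)
    have huw0 : u 0 ≠ w 0 := by rw [hu0]; exact fun h => hw0 h.symm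
    have huw1 : u 1 ≠ w 1 := by rw [hw1]; exact hu1
    have huw : u ≠ w := fun h => huw0 (by rw [h])
    have hduv : G2.dist u v = 1 :=
      SimpleGraph.dist_eq_one_iff_adj.mpr (hadj1 u v hu0 hu1)
    have hdvw : G2.dist v w = 1 :=
      SimpleGraph.dist_eq_one_iff_adj.mpr (hadj0 v w (fun h => hw0 h.symm) hw1.symm)
    have hduw : G2.dist u w = 2 := hdist2 u w huw0 huw1
    have hreach : G2.Reachable u w := by
      have := hdist2 u w huw0 huw1
      by_contra hr
      rw [SimpleGraph.dist_eq_zero_iff_eq_or_not_reachable.mpr (Or.inr hr)] at this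
      omega
    exact hS u hu v hv w hw huv (fun h => hwv h.symm) huw ⟨hreach, by omega⟩
  -- split S into row-type and column-type vertices
  set P : (∀ i : Fin 2, Fin (![n₁, n₂] i)) → Prop :=
    fun v => ∃ u ∈ S, u ≠ v ∧ u 0 = v 0 with hP
  set A := S.filter P with hA
  set B := S.filter (fun v => ¬ P v) with hB
  have hcardAB : A.card + B.card = S.card := Finset.card_filter_add_card_filter_not _
  have hAS : ∀ v ∈ A, v ∈ S := fun v hv => (Finset.mem_filter.mp hv).1
  have hBS : ∀ v ∈ B, v ∈ S := fun v hv => (Finset.mem_filter.mp hv).1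
  -- injectivity of coordinate 1 on A
  have hAinj : Set.InjOn (fun v : ∀ i : Fin 2, Fin (![n₁, n₂] i) => v 1) ↑A := by
    intro v hv v' hv' h
    by_contra hne
    obtain ⟨-, u, hu, hune, hu0⟩ := Finset.mem_filter.mp hv
    exact hstar v (hAS v hv) u hu v' (hAS v' hv') hune hu0 (fun hh => hne hh.symm) h.symm
  -- injectivity of coordinate 0 on B
  have hBinj : Set.InjOn (fun v : ∀ i : Fin 2, Fin (![n₁, n₂] i) => v 0) ↑B := by
    intro v hv v' hv' h
    by_contra hne
    obtain ⟨hvS, hnP⟩ := Finset.mem_filter.mp hv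
    exact hnP ⟨v', hBS v' hv', fun hh => hne hh.symm, h.symm⟩
  -- disjointness of coordinate-1 images
  have hd1 : Disjoint (A.image (fun v => v 1)) (B.image (fun v => v 1)) := by
    rw [Finset.disjoint_left]
    rintro x hx hx'
    obtain ⟨v, hv, rfl⟩ := Finset.mem_image.mp hx
    obtain ⟨w, hw, hw1⟩ := Finset.mem_image.mp hx'
    have hvw : w ≠ v := by
      rintro rfl
      obtain ⟨-, hnP⟩ := Finset.mem_filter.mp hw
      exact hnP (Finset.mem_filter.mp hv).2
    obtain ⟨-, u, hu, hune, hu0⟩ := Finset.mem_filter.mp hv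
    exact hstar v (hAS v hv) u hu w (hBS w hw) hune hu0 hvw hw1
  -- disjointness of coordinate-0 images
  have hd0 : Disjoint (A.image (fun v => v 0)) (B.image (fun v => v 0)) := by
    rw [Finset.disjoint_left]
    rintro x hx hx'
    obtain ⟨v, hv, rfl⟩ := Finset.mem_image.mp hx
    obtain ⟨w, hw, hw0⟩ := Finset.mem_image.mp hx'
    have hvw : v ≠ w := by
      rintro rfl
      obtain ⟨-, hnP⟩ := Finset.mem_filter.mp hw
      exact hnP (Finset.mem_filter.mp hv).2
    obtain ⟨-, hnP⟩ := Finset.mem_filter.mp hw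
    exact hnP ⟨v, hAS v hv, hvw, hw0.symm⟩
  -- cardinality bookkeeping
  have hcA : A.card = (A.image (fun v => v 1)).card :=
    (Finset.card_image_of_injOn hAinj).symm
  have hcB : B.card = (B.image (fun v => v 0)).card :=
    (Finset.card_image_of_injOn hBinj).symm
  have hsum1 : (A.image (fun v => v 1)).card + (B.image (fun v => v 1)).card ≤ n₂ := by
    rw [← Finset.card_union_of_disjoint hd1]
    have := Finset.card_le_univ (A.image (fun v => v 1) ∪ B.image (fun v => v 1))
    simpa using this
  have hsum0 : (A.image (fun v => v 0)).card + (B.image (fun v => v 0)).card ≤ n₁ := by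
    rw [← Finset.card_union_of_disjoint hd0]
    have := Finset.card_le_univ (A.image (fun v => v 0) ∪ B.image (fun v => v 0))
    exact this.trans (Fintype.card_fin n₁).le
  obtain ⟨a1, ha1⟩ : ∃ x, (A.image (fun v => v 1)).card = x := ⟨_, rfl⟩
  obtain ⟨a0, ha0⟩ : ∃ x, (A.image (fun v => v 0)).card = x := ⟨_, rfl⟩
  obtain ⟨b1, hb1⟩ : ∃ x, (B.image (fun v => v 1)).card = x := ⟨_, rfl⟩
  obtain ⟨b0, hb0⟩ : ∃ x, (B.image (fun v => v 0)).card = x := ⟨_, rfl⟩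
  rw [ha1] at hcA
  rw [ha1, hb1] at hsum1
  rw [hb0] at hcB
  rw [ha0, hb0] at hsum0
  have hAalt : A.card = 0 ∨ 1 ≤ a0 := by
    rcases Finset.eq_empty_or_nonempty A with h | h
    · left; rw [h]; rfl
    · exact Or.inr (ha0 ▸ Finset.card_pos.mpr (h.image _))
  have hBalt : B.card = 0 ∨ 1 ≤ b1 := by
    rcases Finset.eq_empty_or_nonempty B with h | h
    · left; rw [h]; rfl
    · exact Or.inr (hb1 ▸ Finset.card_pos.mpr (h.image _))
  clear ha1 ha0 hb1 hb0
  rcases hAalt with hAe | hA0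
  · omega
  · rcases hBalt with hBe | hB1
    · omega
    · omega

end Upper

theorem gp_hamming :
    (∀ (k : ℕ) (n : Fin k → ℕ), 2 ≤ k → (∀ i, 2 ≤ n i) →
      (∑ i, n i) - k ≤ gpNum (hammingGraph n)) ∧
    (∀ n₁ n₂ : ℕ, 2 ≤ n₁ → 2 ≤ n₂ →
      gpNum (hammingGraph ![n₁, n₂]) = n₁ + n₂ - 2) := by
  constructor
  · intro k n _ hn
    exact aux_lower hn
  · intro n₁ n₂ h1 h2
    refine le_antisymm (aux_upper h1 h2) ?_
    have hn : ∀ i : Fin 2, 2 ≤ (![n₁, n₂]) i := by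
      intro i; fin_cases i <;> simpa
    have := aux_lower hn
    have hsum : ∑ i, (![n₁, n₂]) i = n₁ + n₂ := by
      simp [Fin.sum_univ_two]
    rwa [hsum] at this
end

section
/- Let G be a finite connected simple graph and X ⊆ V(G). Then X is an outer general position set of G if and only if every two distinct vertices of X are mutually maximally distant in G. Consequently, the outer general position number gpo(G) equals the clique number ω(G_SR) of the strong resolving graph of G. -/
open SimpleGraph

variable {V : Type*}

/-- The pair `u, v` is `X`-positionable: every vertex of `X` on any shortest
`u,v`-path is an endpoint of the path. -/
def XPositionable (G : SimpleGraph V) (X : Set V) (u v : V) : Prop :=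
  ∀ p : G.Walk u v, p.length = G.dist u v →
    ∀ w ∈ p.support, w ∈ X → w = u ∨ w = v

/-- `X` is an outer general position set: every pair of vertices of `X` is
`X`-positionable, and so is every pair consisting of a vertex of `X` and a vertex
outside of `X`. -/
def IsOuterGPSet (G : SimpleGraph V) (X : Set V) : Prop :=
  (∀ u ∈ X, ∀ v ∈ X, XPositionable G X u v) ∧
    (∀ u ∈ X, ∀ v ∉ X, XPositionable G X u v)

/-- The outer general position number of `G`. -/
noncomputable def gpoNum (G : SimpleGraph V) [Fintype V] : ℕ :=
  sSup {n | ∃ S : Finset V, IsOuterGPSet G ↑S ∧ S.card = n}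

/-- `x` is maximally distant from `y`. -/
def MaxDistantFrom (G : SimpleGraph V) (x y : V) : Prop :=
  ∀ z, G.Adj x z → G.dist y z ≤ G.dist y x

/-- `x` and `y` are mutually maximally distant in `G`. -/
def MutuallyMaxDistant (G : SimpleGraph V) (x y : V) : Prop :=
  MaxDistantFrom G x y ∧ MaxDistantFrom G y x

/-- The strong resolving graph of `G`: vertices of `G`, with two distinct vertices
adjacent iff they are mutually maximally distant in `G`. -/
def strongResolvingGraph (G : SimpleGraph V) : SimpleGraph V where
  Adj x y := x ≠ y ∧ MutuallyMaxDistant G x y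
  symm := by
    constructor
    intro x y ⟨hxy, h1, h2⟩
    exact ⟨hxy.symm, h2, h1⟩
  loopless := by
    constructor
    intro x ⟨hxx, _⟩
    exact hxx rfl

lemma key_neighbor [DecidableEq V] {G : SimpleGraph V} (hG : G.Connected) {u v w : V}
    (p : G.Walk u v) (hp : p.length = G.dist u v) (hw : w ∈ p.support) (hwv : w ≠ v) :
    ∃ z, G.Adj w z ∧ G.dist u w < G.dist u z := by
  have hq : ¬ (p.dropUntil w hw).Nil := by
    intro h
    exact hwv (Walk.eq_of_length_eq_zero (Walk.nil_iff_length_eq.mp h))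
  obtain ⟨z, hadj, q', hq'⟩ := Walk.not_nil_iff.mp hq
  refine ⟨z, hadj, ?_⟩
  have hlen : (p.takeUntil w hw).length + (p.dropUntil w hw).length = p.length := by
    rw [← Walk.length_append, Walk.take_spec]
  have h1 : G.dist u w ≤ (p.takeUntil w hw).length := SimpleGraph.dist_le _
  have h2 : G.dist z v ≤ q'.length := SimpleGraph.dist_le _
  have h3 : G.dist u v ≤ G.dist u z + G.dist z v := hG.dist_triangle
  have h4 : (p.dropUntil w hw).length = q'.length + 1 := by
    rw [hq', Walk.length_cons]
  omega

lemma mdf_of_gp {G : SimpleGraph V} (hG : G.Connected) {X : Set V} {u v : V}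
    (hX : IsOuterGPSet G X) (hu : u ∈ X) (hv : v ∈ X) (huv : u ≠ v) :
    MaxDistantFrom G u v := by
  intro z hz
  by_contra hlt
  push_neg at hlt
  obtain ⟨q, hq⟩ := (hG v u).exists_walk_length_eq_dist
  have hdz : G.dist v z = G.dist v u + 1 := by
    have hle : G.dist v z ≤ (q.append (Walk.cons hz Walk.nil)).length :=
      SimpleGraph.dist_le _
    rw [Walk.length_append, Walk.length_cons, Walk.length_nil, hq] at hle
    omega
  have hplen : (q.append (Walk.cons hz Walk.nil)).length = G.dist v z := by
    rw [Walk.length_append, Walk.length_cons, Walk.length_nil, hq, hdz]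
  have husup : u ∈ (q.append (Walk.cons hz Walk.nil)).support := by
    rw [Walk.mem_support_append_iff]
    exact Or.inl q.end_mem_support
  have hres : u = v ∨ u = z := by
    by_cases hzX : z ∈ X
    · exact hX.1 v hv z hzX _ hplen u husup hu
    · exact hX.2 v hv z hzX _ hplen u husup hu
  rcases hres with h | h
  · exact huv h
  · exact G.irrefl (h ▸ hz)

theorem outerGP_iff_MMD [Fintype V] (G : SimpleGraph V) (hG : G.Connected) :
    (∀ X : Set V, IsOuterGPSet G X ↔
      ∀ u ∈ X, ∀ v ∈ X, u ≠ v → MutuallyMaxDistant G u v) ∧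
      gpoNum G = (strongResolvingGraph G).cliqueNum := by
  classical
  have main : ∀ X : Set V, IsOuterGPSet G X ↔
      ∀ u ∈ X, ∀ v ∈ X, u ≠ v → MutuallyMaxDistant G u v := by
    intro X
    constructor
    · intro hX u hu v hv huv
      exact ⟨mdf_of_gp hG hX hu hv huv, mdf_of_gp hG hX hv hu huv.symm⟩
    · intro hmmd
      have hpos : ∀ u ∈ X, ∀ v, XPositionable G X u v := by
        intro u hu v p hp w hwsup hwX
        by_contra hcon
        push_neg at hcon
        obtain ⟨hwu, hwv⟩ := hcon
        obtain ⟨z, hadj, hlt⟩ := key_neighbor hG p hp hwsup hwv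
        exact absurd ((hmmd u hu w hwX (Ne.symm hwu)).2 z hadj) (not_le.mpr hlt)
      exact ⟨fun u hu v _ => hpos u hu v, fun u hu v _ => hpos u hu v⟩
  refine ⟨main, ?_⟩
  have hset : {n | ∃ S : Finset V, IsOuterGPSet G ↑S ∧ S.card = n}
      = {n | ∃ s, (strongResolvingGraph G).IsNClique n s} := by
    ext n
    constructor
    · rintro ⟨S, hS, rfl⟩
      refine ⟨S, ⟨?_, rfl⟩⟩
      intro u hu v hv hne
      exact ⟨hne, (main ↑S).mp hS u hu v hv hne⟩
    · rintro ⟨s, hs⟩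
      refine ⟨s, ?_, hs.card_eq⟩
      refine (main ↑s).mpr ?_
      intro u hu v hv hne
      exact (hs.isClique hu hv hne).2
  rw [gpoNum, SimpleGraph.cliqueNum, hset]
end
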